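/- Let f : ℝ × ℝⁿ → ℝⁿ and g : ℝ → ℝ be smooth, and let Ψ, Ψ̂ : ℝ × ℝⁿ → ℝ be C^{1,2} with Ψ > 0, satisfying the coupled Schrödinger PDEs ∂Ψ/∂t = −(∇ₓΨ)ᵀf − (g²/2)ΔₓΨ and ∂Ψ̂/∂t = −∇ₓ·(Ψ̂ f) + (g²/2)ΔₓΨ̂. Then p := Ψ·Ψ̂ satisfies the Fokker–Planck equation of the forward SB SDE: ∂p/∂t = −∇ₓ·(p·(f + g² ∇ₓ log Ψ)) + (g²/2)Δₓp. -/

import Mathlib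

open scoped BigOperators RealInnerProductSpace

/-- Divergence of a vector field on `ℝⁿ`: `∇·F = Σᵢ ∂Fᵢ/∂xᵢ`. -/
noncomputable def diverg {n : ℕ} (F : EuclideanSpace ℝ (Fin n) → EuclideanSpace ℝ (Fin n))
    (x : EuclideanSpace ℝ (Fin n)) : ℝ :=
  ∑ i, fderiv ℝ F x (EuclideanSpace.single i 1) i

/-- Laplacian `Δf = ∇·∇f`. -/
noncomputable def lap {n : ℕ} (f : EuclideanSpace ℝ (Fin n) → ℝ)
    (x : EuclideanSpace ℝ (Fin n)) : ℝ :=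
  diverg (fun y => gradient f y) x

section Helpers

variable {n : ℕ}
local notation "E" => EuclideanSpace ℝ (Fin n)

lemma sum_single_eq (v : E) : ∑ i, v i • (EuclideanSpace.single i 1 : E) = v := by
  ext j
  rw [show (∑ i : Fin n, v i • (EuclideanSpace.single i 1 : E)) j
      = EuclideanSpace.proj (𝕜 := ℝ) j (∑ i, v i • (EuclideanSpace.single i 1 : E)) from rfl,
    map_sum]
  simp [EuclideanSpace.single_apply]

lemma clm_apply_eq_sum (L : E →L[ℝ] ℝ) (v : E) :
    L v = ∑ i, v i * L (EuclideanSpace.single i 1) := by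
  conv_lhs => rw [← sum_single_eq v]
  simp

lemma fderiv_inner_gradient (u : E → ℝ) (x v : E) :
    fderiv ℝ u x v = ⟪gradient u x, v⟫ := by
  rw [gradient, InnerProductSpace.toDual_symm_apply]

lemma diverg_add (F G : E → E) (x : E) (hF : DifferentiableAt ℝ F x)
    (hG : DifferentiableAt ℝ G x) :
    diverg (fun y => F y + G y) x = diverg F x + diverg G x := by
  unfold diverg
  rw [← Finset.sum_add_distrib]
  congr 1; ext i
  rw [fderiv_fun_add hF hG]
  simp

lemma diverg_smul (φ : E → ℝ) (F : E → E) (x : E) (hφ : DifferentiableAt ℝ φ x)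
    (hF : DifferentiableAt ℝ F x) :
    diverg (fun y => φ y • F y) x = fderiv ℝ φ x (F x) + φ x * diverg F x := by
  unfold diverg
  rw [fderiv_fun_smul hφ hF, clm_apply_eq_sum (fderiv ℝ φ x) (F x), Finset.mul_sum,
    ← Finset.sum_add_distrib]
  congr 1; ext i
  simp only [ContinuousLinearMap.add_apply, ContinuousLinearMap.smul_apply,
    ContinuousLinearMap.smulRight_apply, PiLp.add_apply, PiLp.smul_apply, smul_eq_mul]
  ring

lemma gradient_mul' (u v : E → ℝ) (x : E) (hu : DifferentiableAt ℝ u x)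
    (hv : DifferentiableAt ℝ v x) :
    gradient (fun y => u y * v y) x = u x • gradient v x + v x • gradient u x := by
  unfold gradient
  rw [fderiv_fun_mul hu hv, map_add, map_smul, map_smul]

lemma gradient_log' (u : E → ℝ) (y : E) (hu : DifferentiableAt ℝ u y) (hne : u y ≠ 0) :
    gradient (fun z => Real.log (u z)) y = (u y)⁻¹ • gradient u y := by
  have h : HasFDerivAt (fun z => Real.log (u z)) ((u y)⁻¹ • fderiv ℝ u y) y :=
    (Real.hasDerivAt_log hne).comp_hasFDerivAt y hu.hasFDerivAt
  rw [show gradient (fun z => Real.log (u z)) y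
      = (InnerProductSpace.toDual ℝ E).symm (fderiv ℝ (fun z => Real.log (u z)) y) from rfl,
    h.fderiv, map_smul]
  rfl

lemma gradient_contDiff (u : E → ℝ) (hu : ContDiff ℝ 2 u) :
    ContDiff ℝ 1 (fun y => gradient u y) := by
  have : (fun y => gradient u y)
      = fun y => (InnerProductSpace.toDual ℝ E).symm (fderiv ℝ u y) := rfl
  rw [this]
  exact (InnerProductSpace.toDual ℝ E).symm.contDiff.comp (hu.fderiv_right (by norm_num))

lemma fderiv_gradient_symm (u v : E → ℝ) (x : E) :
    fderiv ℝ u x (gradient v x) = fderiv ℝ v x (gradient u x) := by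
  rw [fderiv_inner_gradient, fderiv_inner_gradient, real_inner_comm]

lemma lap_mul (u v : E → ℝ) (x : E) (hu : ContDiff ℝ 2 u) (hv : ContDiff ℝ 2 v) :
    lap (fun y => u y * v y) x
      = fderiv ℝ v x (gradient u x) + v x * lap u x
        + (fderiv ℝ u x (gradient v x) + u x * lap v x) := by
  have hud : Differentiable ℝ u := hu.differentiable (by norm_num)
  have hvd : Differentiable ℝ v := hv.differentiable (by norm_num)
  have hgu := gradient_contDiff u hu
  have hgv := gradient_contDiff v hv
  have hgud : Differentiable ℝ (fun y => gradient u y) := hgu.differentiable (by norm_num)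
  have hgvd : Differentiable ℝ (fun y => gradient v y) := hgv.differentiable (by norm_num)
  unfold lap
  have heq : (fun y => gradient (fun z => u z * v z) y)
      = fun y => (fun w => v w • gradient u w) y + (fun w => u w • gradient v w) y := by
    funext y
    rw [gradient_mul' u v y (hud y) (hvd y)]
    abel
  rw [heq, diverg_add (fun w => v w • gradient u w) (fun w => u w • gradient v w) x ((hvd x).smul (hgud x)) ((hud x).smul (hgvd x)),
    diverg_smul _ _ x (hvd x) (hgud x), diverg_smul _ _ x (hud x) (hgvd x)]

end Helpers

/-- generalized SB optimality: if `Ψ > 0` and `Ψ̂` solve the coupled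
Schrödinger PDEs, then `p := Ψ·Ψ̂` solves the Fokker–Planck equation of the forward
SB SDE. -/
theorem stmt_7 {n : ℕ} (f : ℝ → EuclideanSpace ℝ (Fin n) → EuclideanSpace ℝ (Fin n))
    (g : ℝ → ℝ) (Ψ Ψhat : ℝ → EuclideanSpace ℝ (Fin n) → ℝ)
    (hf : ContDiff ℝ (⊤ : ℕ∞) (fun q : ℝ × EuclideanSpace ℝ (Fin n) => f q.1 q.2))
    (hg : ContDiff ℝ (⊤ : ℕ∞) g)
    (hΨ : ContDiff ℝ 2 (fun q : ℝ × EuclideanSpace ℝ (Fin n) => Ψ q.1 q.2))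
    (hΨhat : ContDiff ℝ 2 (fun q : ℝ × EuclideanSpace ℝ (Fin n) => Ψhat q.1 q.2))
    (hpos : ∀ t x, 0 < Ψ t x)
    (hpdeΨ : ∀ t x, deriv (fun τ => Ψ τ x) t
        = -⟪gradient (Ψ t) x, f t x⟫ - (g t) ^ 2 / 2 * lap (Ψ t) x)
    (hpdeΨhat : ∀ t x, deriv (fun τ => Ψhat τ x) t
        = - diverg (fun y => Ψhat t y • f t y) x + (g t) ^ 2 / 2 * lap (Ψhat t) x) :
    ∀ t x,
      deriv (fun τ => Ψ τ x * Ψhat τ x) t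
        = - diverg (fun y =>
              (Ψ t y * Ψhat t y) •
                (f t y + (g t) ^ 2 • gradient (fun z => Real.log (Ψ t z)) y)) x
          + (g t) ^ 2 / 2 * lap (fun y => Ψ t y * Ψhat t y) x := by
  intro t x
  -- spatial regularity
  have hΨt : ContDiff ℝ 2 (Ψ t) := hΨ.comp (ContDiff.prodMk contDiff_const contDiff_id)
  have hΨht : ContDiff ℝ 2 (Ψhat t) := hΨhat.comp (ContDiff.prodMk contDiff_const contDiff_id)
  have hft : ContDiff ℝ (⊤ : ℕ∞) (f t) := hf.comp (ContDiff.prodMk contDiff_const contDiff_id)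
  have hΨd : Differentiable ℝ (Ψ t) := hΨt.differentiable (by norm_num)
  have hΨhd : Differentiable ℝ (Ψhat t) := hΨht.differentiable (by norm_num)
  have hfd : Differentiable ℝ (f t) := hft.differentiable (by simp)
  have hgΨ : Differentiable ℝ (fun y => gradient (Ψ t) y) :=
    (gradient_contDiff _ hΨt).differentiable (by norm_num)
  have hgΨh : Differentiable ℝ (fun y => gradient (Ψhat t) y) :=
    (gradient_contDiff _ hΨht).differentiable (by norm_num)
  -- time derivatives
  have hdΨ : DifferentiableAt ℝ (fun τ => Ψ τ x) t := by
    have : ContDiff ℝ 2 (fun τ => Ψ τ x) := hΨ.comp (ContDiff.prodMk contDiff_id contDiff_const)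
    exact (this.differentiable (by norm_num)) t
  have hdΨh : DifferentiableAt ℝ (fun τ => Ψhat τ x) t := by
    have : ContDiff ℝ 2 (fun τ => Ψhat τ x) := hΨhat.comp (ContDiff.prodMk contDiff_id contDiff_const)
    exact (this.differentiable (by norm_num)) t
  rw [deriv_fun_mul hdΨ hdΨh, hpdeΨ t x, hpdeΨhat t x]
  -- rewrite the drift field
  have hfield : (fun y => (Ψ t y * Ψhat t y) •
        (f t y + (g t) ^ 2 • gradient (fun z => Real.log (Ψ t z)) y))
      = fun y => (fun w => (Ψ t w * Ψhat t w) • f t w) y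
          + (fun w => ((g t) ^ 2 * Ψhat t w) • gradient (Ψ t) w) y := by
    funext y
    have hne : Ψ t y ≠ 0 := (hpos t y).ne'
    simp only [gradient_log' (Ψ t) y (hΨd y) hne, smul_add, smul_smul]
    congr 1
    congr 1
    field_simp
  rw [hfield]
  -- expand divergences
  have h1 : DifferentiableAt ℝ (fun w => Ψ t w * Ψhat t w) x := (hΨd x).mul (hΨhd x)
  have h2 : DifferentiableAt ℝ (fun w => (g t) ^ 2 * Ψhat t w) x :=
    (differentiableAt_const _).mul (hΨhd x)
  rw [diverg_add (fun w => (Ψ t w * Ψhat t w) • f t w) (fun w => ((g t) ^ 2 * Ψhat t w) • gradient (Ψ t) w) x (h1.smul (hfd x)) (h2.smul (hgΨ x)),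
    diverg_smul _ _ x h1 (hfd x), diverg_smul _ _ x h2 (hgΨ x),
    diverg_smul _ _ x (hΨhd x) (hfd x),
    lap_mul _ _ x hΨt hΨht]
  have e1 : fderiv ℝ (fun w => Ψ t w * Ψhat t w) x (f t x)
      = Ψ t x * fderiv ℝ (Ψhat t) x (f t x) + Ψhat t x * fderiv ℝ (Ψ t) x (f t x) := by
    rw [fderiv_fun_mul (hΨd x) (hΨhd x)]
    simp
  have e2 : fderiv ℝ (fun w => (g t) ^ 2 * Ψhat t w) x (gradient (Ψ t) x)
      = (g t) ^ 2 * fderiv ℝ (Ψhat t) x (gradient (Ψ t) x) := by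
    rw [fderiv_const_mul (hΨhd x)]
    simp
  have e3 : ⟪gradient (Ψ t) x, f t x⟫ = fderiv ℝ (Ψ t) x (f t x) :=
    (fderiv_inner_gradient _ _ _).symm
  have e4 : fderiv ℝ (Ψ t) x (gradient (Ψhat t) x)
      = fderiv ℝ (Ψhat t) x (gradient (Ψ t) x) := fderiv_gradient_symm _ _ _
  rw [e1, e2, e3, e4,
    show diverg (fun y => gradient (Ψ t) y) x = lap (Ψ t) x from rfl]
  ring
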